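/- An elementary cellular automaton F_N is topologically transitive if and only if it is surjective and sensitive. -/

import Mathlib

/-- Cantor metric on configurations `ℤ → Bool`. -/
noncomputable def dC (x y : ℤ → Bool) : ℝ :=
  ∑' i : ℤ, if x i = y i then 0 else (1 / 2 : ℝ) ^ i.natAbs

/-- Local rule of the ECA with rule number `N`:
`(a,b,c)` is mapped to the coefficient of `2^(4a+2b+c)` in the binary expansion of `N`. -/
def localRule (N : ℕ) (a b c : Bool) : Bool :=
  N.testBit (4 * a.toNat + 2 * b.toNat + c.toNat)

/-- The elementary cellular automaton with rule number `N`. -/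
def eca (N : ℕ) (x : ℤ → Bool) : ℤ → Bool :=
  fun i => localRule N (x (i - 1)) (x i) (x (i + 1))

/-- `x` belongs to the cylinder `[u]_0`. -/
def inCyl (u : List Bool) (x : ℤ → Bool) : Prop :=
  ∀ j : Fin u.length, x ((j : ℕ) : ℤ) = u.get j

/-- `u` is an `m`-blocking word for `F`. -/
def Blocking (F : (ℤ → Bool) → ℤ → Bool) (m : ℕ) (u : List Bool) : Prop :=
  m ≤ u.length ∧ ∃ q : ℕ, q + m ≤ u.length ∧
    ∀ x y : ℤ → Bool, inCyl u x → inCyl u y → ∀ n : ℕ, ∀ j : ℤ,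
      (q : ℤ) ≤ j → j < (q : ℤ) + (m : ℤ) → F^[n] x j = F^[n] y j

/-- `x` is an equicontinuity point of `F`. -/
def EquicontinuityPoint (F : (ℤ → Bool) → ℤ → Bool) (x : ℤ → Bool) : Prop :=
  ∀ ε : ℝ, 0 < ε → ∃ δ : ℝ, 0 < δ ∧ ∀ y : ℤ → Bool, dC x y < δ →
    ∀ n : ℕ, dC (F^[n] x) (F^[n] y) < ε

/-- `F` is almost equicontinuous: it has at least one equicontinuity point. -/
def AlmostEquicontinuousCA (F : (ℤ → Bool) → ℤ → Bool) : Prop :=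
  ∃ x : ℤ → Bool, EquicontinuityPoint F x

/-- `F` is equicontinuous: every point is an equicontinuity point. -/
def EquicontinuousCA (F : (ℤ → Bool) → ℤ → Bool) : Prop :=
  ∀ x : ℤ → Bool, EquicontinuityPoint F x

/-- `F` is sensitive to initial conditions. -/
def SensitiveCA (F : (ℤ → Bool) → ℤ → Bool) : Prop :=
  ∃ ε : ℝ, 0 < ε ∧ ∀ x : ℤ → Bool, ∀ δ : ℝ, 0 < δ →
    ∃ y : ℤ → Bool, dC x y < δ ∧ ∃ n : ℕ, ε ≤ dC (F^[n] x) (F^[n] y)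

/-- `F` is positively expansive. -/
def PosExpansiveCA (F : (ℤ → Bool) → ℤ → Bool) : Prop :=
  ∃ ε : ℝ, 0 < ε ∧ ∀ x y : ℤ → Bool, x ≠ y →
    ∃ n : ℕ, ε ≤ dC (F^[n] x) (F^[n] y)

/-- The power `σ^q` of the shift map, for `q : ℤ` : `(σ^q x)_i = x_{i+q}`. -/
def shiftBy (q : ℤ) (x : ℤ → Bool) : ℤ → Bool := fun i => x (i + q)

/-- `F` is left-permutive. -/
def LeftPermutive (N : ℕ) : Prop :=
  ∀ b c : Bool, Function.Bijective (fun a => localRule N a b c)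

/-- `F` is right-permutive. -/
def RightPermutive (N : ℕ) : Prop :=
  ∀ a b : Bool, Function.Bijective (fun c => localRule N a b c)

/-- `U` is open in the Cantor metric topology. -/
def IsOpenC (U : Set (ℤ → Bool)) : Prop :=
  ∀ x ∈ U, ∃ δ : ℝ, 0 < δ ∧ ∀ y : ℤ → Bool, dC x y < δ → y ∈ U

/-- `F` is topologically transitive. -/
def TransitiveCA (F : (ℤ → Bool) → ℤ → Bool) : Prop :=
  ∀ U V : Set (ℤ → Bool), IsOpenC U → IsOpenC V → U.Nonempty → V.Nonempty →
    ∃ n : ℕ, 0 < n ∧ ((F^[n]) '' U ∩ V).Nonempty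

/-!
Transitivity forces surjectivity: the range of a continuous self-map of the compact Cantor space
is closed, and transitivity makes it meet every cylinder. Transitivity forces sensitivity: at a
point of equicontinuity the orbit of the centre cell is frozen on some cylinder around the point;
placing a second copy of that cylinder's window just to its right freezes two distant cells to the
same values for all times, which transitivity can separate since `F` commutes with the shift.

Conversely, inspection of the 256 rules shows that every surjective ECA is left- or
right-permutive, the identity (rule 204) or the complement (rule 51). The last two are isometries,
hence not sensitive. A left-permutive rule is transitive: the cells of a target window can be
prescribed one at a time, from right to left, by choosing the cell `n` steps to the left of each;
right-permutive rules reduce to this by reflection.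
-/

open Function Filter Topology

section CantorMetric

lemma summable_half_pow_natAbs : Summable fun i : ℤ => (1 / 2 : ℝ) ^ i.natAbs :=
  .of_nat_of_neg (by simpa using summable_geometric_two) (by simpa using summable_geometric_two)

lemma summable_dC (x y : ℤ → Bool) :
    Summable fun i : ℤ => if x i = y i then (0 : ℝ) else (1 / 2) ^ i.natAbs :=
  summable_half_pow_natAbs.of_nonneg_of_le (fun i => by split_ifs <;> positivity)
    (fun i => by split_ifs <;> simp)

lemma eq_of_dC_lt_half_pow {x y : ℤ → Bool} {K : ℕ} (h : dC x y < (1 / 2) ^ K) {i : ℤ}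
    (hi : i.natAbs ≤ K) : x i = y i := by
  by_contra hne
  have hterm := (summable_dC x y).le_tsum i fun j _ => by split_ifs <;> positivity
  rw [if_neg hne] at hterm
  exact (hterm.trans_lt h).not_ge (pow_le_pow_of_le_one (by norm_num) (by norm_num) hi)

lemma exists_forall_dC_lt {δ : ℝ} (hδ : 0 < δ) :
    ∃ K : ℕ, ∀ x y : ℤ → Bool, (∀ i : ℤ, i.natAbs ≤ K → x i = y i) → dC x y < δ := by
  let tail : ℕ → ℤ → ℝ := fun K i => if i.natAbs ≤ K then 0 else (1 / 2) ^ i.natAbs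
  have tail_le (K : ℕ) (i : ℤ) : ‖tail K i‖ ≤ (1 / 2) ^ i.natAbs := by
    unfold tail; split_ifs <;> simp
  have htail : Tendsto (fun K => ∑' i, tail K i) atTop (𝓝 0) := by
    simpa using tendsto_tsum_of_dominated_convergence (g := 0) summable_half_pow_natAbs
      (fun i => tendsto_const_nhds.congr' <|
        (eventually_ge_atTop i.natAbs).mono fun K hK => by simp [tail, hK])
      (.of_forall tail_le)
  obtain ⟨K, hK⟩ := (htail.eventually (gt_mem_nhds hδ)).exists
  refine ⟨K, fun x y hxy => (Summable.tsum_le_tsum (fun i => ?_) (summable_dC x y)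
    (summable_half_pow_natAbs.of_norm_bounded (tail_le K))).trans_lt hK⟩
  by_cases hi : i.natAbs ≤ K
  · simp [tail, hi, hxy i hi]
  · simp only [tail, hi, if_false]; split_ifs <;> simp

end CantorMetric

section Cylinders

variable {α : Type*}

def centralCyl (x : ℤ → α) (K : ℕ) : Set (ℤ → α) :=
  {y | ∀ i : ℤ, i.natAbs ≤ K → y i = x i}

lemma self_mem_centralCyl (x : ℤ → α) (K : ℕ) : x ∈ centralCyl x K := fun _ _ => rfl

lemma centralCyl_anti (x : ℤ → α) {K L : ℕ} (h : K ≤ L) : centralCyl x L ⊆ centralCyl x K :=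
  fun _ hy i hi => hy i (hi.trans h)

lemma isOpenC_centralCyl (x : ℤ → Bool) (K : ℕ) : IsOpenC (centralCyl x K) :=
  fun _ hy => ⟨(1 / 2) ^ K, by positivity,
    fun _ hy' i hi => (eq_of_dC_lt_half_pow hy' hi).symm.trans (hy i hi)⟩

lemma IsOpenC.exists_centralCyl_subset {U : Set (ℤ → Bool)} (hU : IsOpenC U) {x : ℤ → Bool}
    (hx : x ∈ U) : ∃ K, centralCyl x K ⊆ U := by
  obtain ⟨δ, hδ, hball⟩ := hU x hx
  obtain ⟨K, hK⟩ := exists_forall_dC_lt hδ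
  exact ⟨K, fun y hy => hball y (hK x y fun i hi => (hy i hi).symm)⟩

lemma IsOpen.exists_centralCyl_subset [TopologicalSpace α] {U : Set (ℤ → α)} (hU : IsOpen U)
    {x : ℤ → α} (hx : x ∈ U) : ∃ K, centralCyl x K ⊆ U := by
  obtain ⟨I, u, hu, hIU⟩ := isOpen_pi_iff.1 hU x hx
  refine ⟨I.sup Int.natAbs, fun y hy => hIU fun i hi => ?_⟩
  rw [hy i (Finset.le_sup (f := Int.natAbs) hi)]
  exact (hu i hi).2

def CylinderTransitive (F : (ℤ → α) → ℤ → α) : Prop :=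
  ∀ (x y : ℤ → α) (K : ℕ), ∃ n, 0 < n ∧ ∃ x' ∈ centralCyl x K, F^[n] x' ∈ centralCyl y K

lemma CylinderTransitive.transitiveCA {F : (ℤ → Bool) → ℤ → Bool} (h : CylinderTransitive F) :
    TransitiveCA F := by
  rintro U V hU hV ⟨x, hx⟩ ⟨y, hy⟩
  obtain ⟨KU, hKU⟩ := hU.exists_centralCyl_subset hx
  obtain ⟨KV, hKV⟩ := hV.exists_centralCyl_subset hy
  obtain ⟨n, hn, x', hx', hy'⟩ := h x y (max KU KV)
  exact ⟨n, hn, _, ⟨x', hKU (centralCyl_anti x (le_max_left _ _) hx'), rfl⟩,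
    hKV (centralCyl_anti y (le_max_right _ _) hy')⟩

end Cylinders

section CellularAutomaton

variable {α : Type*}

def ca (f : α → α → α → α) (x : ℤ → α) : ℤ → α :=
  fun i => f (x (i - 1)) (x i) (x (i + 1))

lemma continuous_ca [TopologicalSpace α] [DiscreteTopology α] (f : α → α → α → α) :
    Continuous (ca f) :=
  continuous_pi fun i => continuous_of_discreteTopology.comp
    (g := fun p : α × α × α => f p.1 p.2.1 p.2.2)
    (f := fun x : ℤ → α => (x (i - 1), x i, x (i + 1))) (by fun_prop)

lemma iterate_ca_congr (f : α → α → α → α) (n : ℕ) {x y : ℤ → α} {i : ℤ}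
    (h : ∀ j, i - n ≤ j → j ≤ i + n → x j = y j) : (ca f)^[n] x i = (ca f)^[n] y i := by
  induction n generalizing i with
  | zero => simpa using h i (by simp) (by simp)
  | succ n ih =>
    simp only [iterate_succ_apply', ca]
    rw [ih fun j _ _ => h j (by omega) (by omega), ih fun j _ _ => h j (by omega) (by omega),
      ih fun j _ _ => h j (by omega) (by omega)]

section LeftPermutive

variable {f : α → α → α → α}

lemma exists_iterate_ca_update_eq (hf : ∀ b c, Surjective fun a => f a b c) (n : ℕ)
    (x : ℤ → α) (i : ℤ) (v : α) :
    ∃ a, (ca f)^[n] (update x (i - n) a) i = v := by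
  induction n generalizing i v with
  | zero => exact ⟨v, by simp⟩
  | succ n ih =>
    obtain ⟨a', ha'⟩ := hf ((ca f)^[n] x i) ((ca f)^[n] x (i + 1)) v
    obtain ⟨a, ha⟩ := ih (i - 1) a'
    have unaffected : ∀ j, i ≤ j → (ca f)^[n] (update x (i - (n + 1 : ℕ)) a) j = (ca f)^[n] x j :=
      fun j hj => iterate_ca_congr f n fun k hk _ => update_of_ne (by omega) _ _
    refine ⟨a, ?_⟩
    rw [iterate_succ_apply', ca, unaffected i le_rfl, unaffected (i + 1) (by omega),
      show i - ((n + 1 : ℕ) : ℤ) = i - 1 - n by push_cast; ring, ha]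
    exact ha'

lemma exists_iterate_ca_eqOn (hf : ∀ b c, Surjective fun a => f a b c) (n m : ℕ)
    (x v : ℤ → α) (i : ℤ) :
    ∃ x', (∀ j, (j < i - m - n ∨ i - n ≤ j) → x' j = x j) ∧
      ∀ j, i - m ≤ j → j < i → (ca f)^[n] x' j = v j := by
  induction m with
  | zero => exact ⟨x, fun _ _ => rfl, fun j h1 h2 => by omega⟩
  | succ m ih =>
    obtain ⟨x', hx'x, hx'v⟩ := ih
    obtain ⟨a, ha⟩ := exists_iterate_ca_update_eq hf n x' (i - (m + 1 : ℕ)) (v (i - (m + 1 : ℕ)))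
    refine ⟨update x' (i - (m + 1 : ℕ) - n) a, fun j hj => ?_, fun j h1 h2 => ?_⟩
    · rw [update_of_ne (by omega)]
      exact hx'x j (by omega)
    · rcases eq_or_lt_of_le h1 with rfl | hlt
      · exact ha
      · rw [iterate_ca_congr f n fun k _ _ => update_of_ne (by omega) _ _]
        exact hx'v j (by omega) h2

lemma cylinderTransitive_ca (hf : ∀ b c, Surjective fun a => f a b c) :
    CylinderTransitive (ca f) := by
  intro x y K
  obtain ⟨x', hx'x, hx'y⟩ := exists_iterate_ca_eqOn hf (2 * K + 1) (2 * K + 1) x y (K + 1)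
  exact ⟨2 * K + 1, by omega, x', fun i hi => hx'x i (by omega),
    fun i hi => hx'y i (by omega) (by omega)⟩

end LeftPermutive

def reflect (x : ℤ → α) : ℤ → α := fun i => x (-i)

lemma reflect_mem_centralCyl {x y : ℤ → α} {K : ℕ} :
    reflect y ∈ centralCyl x K ↔ y ∈ centralCyl (reflect x) K := by
  refine ⟨fun h i hi => by simpa [reflect] using h (-i) (by simpa using hi), fun h i hi => ?_⟩
  simpa [reflect] using h (-i) (by simpa using hi)

lemma semiconj_reflect_ca (f : α → α → α → α) :
    Semiconj reflect (ca fun a b c => f c b a) (ca f) := by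
  intro x
  funext i
  simp only [ca, reflect]
  congr 2 <;> ring

lemma CylinderTransitive.of_ca_swap {f : α → α → α → α}
    (h : CylinderTransitive (ca fun a b c => f c b a)) : CylinderTransitive (ca f) := by
  intro x y K
  obtain ⟨n, hn, x', hx', hy'⟩ := h (reflect x) (reflect y) K
  refine ⟨n, hn, reflect x', reflect_mem_centralCyl.2 hx', ?_⟩
  rw [← (semiconj_reflect_ca f).iterate_right n x']
  exact reflect_mem_centralCyl.2 hy'

end CellularAutomaton

section Transitive

lemma surjective_of_transitiveCA {F : (ℤ → Bool) → ℤ → Bool} (hF : Continuous F)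
    (h : TransitiveCA F) : Surjective F := by
  intro z
  by_contra hz
  obtain ⟨K, hK⟩ := (isCompact_range hF).isClosed.isOpen_compl.exists_centralCyl_subset
    (show z ∈ (Set.range F)ᶜ from hz)
  obtain ⟨n, hn, -, ⟨x, -, rfl⟩, hxz⟩ := h Set.univ (centralCyl z K)
    (fun _ _ => ⟨1, one_pos, fun _ _ => trivial⟩) (isOpenC_centralCyl z K) Set.univ_nonempty
    ⟨z, self_mem_centralCyl z K⟩
  obtain ⟨k, rfl⟩ := Nat.exists_eq_succ_of_ne_zero hn.ne'
  exact hK hxz ⟨F^[k] x, (iterate_succ_apply' F k x).symm⟩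

lemma sensitiveCA_of_transitiveCA {F : (ℤ → Bool) → ℤ → Bool}
    (hF : ∀ q, Function.Commute F (shiftBy q)) (h : TransitiveCA F) : SensitiveCA F := by
  by_contra hns
  obtain ⟨x, δ, hδ, hstable⟩ : ∃ x δ, 0 < δ ∧
      ∀ y, dC x y < δ → ∀ n, dC (F^[n] x) (F^[n] y) < 1 := by
    unfold SensitiveCA at hns
    push Not at hns
    exact hns 1 one_pos
  obtain ⟨K, hK⟩ := exists_forall_dC_lt hδ
  have frozen : ∀ y ∈ centralCyl x K, ∀ n, F^[n] y 0 = F^[n] x 0 := fun y hy n =>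
    (eq_of_dC_lt_half_pow (K := 0) (by simpa using hstable y (hK x y fun i hi => (hy i hi).symm) n)
      le_rfl).symm
  let L : ℕ := 2 * K + 1
  let u : ℤ → Bool := fun i => if i ≤ K then x i else x (i - L)
  obtain ⟨n, -, -, ⟨y, hyu, rfl⟩, hyw⟩ := h (centralCyl u (L + K)) (centralCyl (fun i => i = 0) L)
    (isOpenC_centralCyl _ _) (isOpenC_centralCyl _ _) ⟨u, self_mem_centralCyl u _⟩
    ⟨_, self_mem_centralCyl _ L⟩
  have hy : y ∈ centralCyl x K := fun i hi => by
    rw [hyu i (by omega)]; exact if_pos (by omega)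
  have hyL : shiftBy L y ∈ centralCyl x K := fun i hi => by
    rw [shiftBy, hyu (i + L) (by omega)]
    simp only [u, if_neg (show ¬ i + (L : ℤ) ≤ K by omega), add_sub_cancel_right]
  have h0 : F^[n] x 0 = true := by simpa [frozen y hy n] using hyw 0 (by omega)
  have hL : F^[n] x 0 = false := by
    have hshift := congrFun ((hF L).iterate_left n y) 0
    simp only [shiftBy, zero_add] at hshift
    simpa [← hshift, frozen _ hyL n] using hyw L le_rfl
  exact absurd (h0.symm.trans hL) (by decide)

end Transitive

section Classification

lemma commute_eca_shiftBy (N : ℕ) (q : ℤ) : Function.Commute (eca N) (shiftBy q) := by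
  intro x
  funext i
  simp only [eca, shiftBy, sub_add_eq_add_sub, add_right_comm]

lemma transitiveCA_eca_of_leftPermutive {N : ℕ} (h : LeftPermutive N) : TransitiveCA (eca N) :=
  (cylinderTransitive_ca fun b c => (h b c).2).transitiveCA

lemma transitiveCA_eca_of_rightPermutive {N : ℕ} (h : RightPermutive N) :
    TransitiveCA (eca N) :=
  (cylinderTransitive_ca fun b c => (h c b).2).of_ca_swap.transitiveCA

lemma not_sensitiveCA_of_dC_map_eq {F : (ℤ → Bool) → ℤ → Bool}
    (hF : ∀ x y, dC (F x) (F y) = dC x y) : ¬ SensitiveCA F := by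
  rintro ⟨ε, hε, h⟩
  obtain ⟨y, hy, n, hn⟩ := h (fun _ => false) ε hε
  have hiter : ∀ n x y, dC (F^[n] x) (F^[n] y) = dC x y := by
    intro n
    induction n with
    | zero => simp
    | succ n ih => simp [iterate_succ_apply', hF, ih]
  linarith [hiter n (fun _ => false) y]

lemma dC_eca_eq {N : ℕ}
    (hN : ∀ a b c a' b' c' : Bool, localRule N a b c = localRule N a' b' c' ↔ b = b')
    (x y : ℤ → Bool) : dC (eca N x) (eca N y) = dC x y := by
  simp only [dC, eca, hN]

/-- The word `w.testBit 0, …, w.testBit (L - 1)` has no preimage `m.testBit 0, …, m.testBit (L + 1)`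
under the local rule. Quantifying over `List.range` keeps the kernel evaluation of `decide` fast. -/
def IsOrphan (N L w : ℕ) : Prop :=
  ∀ m ∈ List.range (2 ^ (L + 2)), ∃ k ∈ List.range L,
    localRule N (m.testBit k) (m.testBit (k + 1)) (m.testBit (k + 2)) ≠ w.testBit k

lemma not_surjective_eca_of_isOrphan {N L w : ℕ} (h : IsOrphan N L w) : ¬ Surjective (eca N) := by
  intro hs
  obtain ⟨x, hx⟩ := hs fun i => w.testBit i.toNat
  let window := (List.range (L + 2)).map fun j : ℕ => x (j - 1)
  have hm : ∀ j < L + 2, (BitVec.ofBoolListLE window).toNat.testBit j = x (j - 1) := by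
    intro j hj
    rw [BitVec.testBit_toNat, BitVec.getLsbD_ofBoolListLE]
    simp [window, hj]
  obtain ⟨k, hk, hne⟩ := h _ <| List.mem_range.2 <| by
    simpa [window] using (BitVec.ofBoolListLE window).isLt
  rw [List.mem_range] at hk
  apply hne
  rw [hm k (by omega), hm (k + 1) (by omega), hm (k + 2) (by omega)]
  simpa [eca, show (k : ℤ) + 2 - 1 = k + 1 by ring] using congrFun hx k


-- A shortest orphan for each non-surjective rule `N`, found by computer search: its length
-- `orphanLength[N]` and the bits of `orphanCode[N]`. The entry is `0` for the 30 surjective rules.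
def orphanLength : List ℕ :=
  [1, 3, 2, 3, 2, 5, 3, 4, 2, 4, 3, 3, 2, 4, 3, 0, 2, 3, 3, 3, 3, 4, 8, 5, 2, 5, 4, 4, 3, 4, 0, 4,
    2, 4, 2, 4, 3, 9, 4, 4, 3, 5, 3, 5, 4, 0, 3, 3, 2, 4, 3, 0, 4, 4, 5, 3, 3, 6, 4, 4, 0, 5, 5, 3,
    2, 4, 2, 5, 2, 4, 3, 4, 3, 6, 4, 0, 3, 5, 4, 4, 3, 3, 4, 4, 3, 0, 0, 4, 4, 0, 0, 9, 4, 4, 5, 5,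
    3, 5, 3, 6, 4, 0, 0, 5, 8, 0, 0, 5, 5, 6, 5, 4, 3, 5, 4, 4, 3, 3, 5, 3, 0, 5, 5, 4, 5, 4, 3, 3,
    3, 3, 4, 5, 4, 5, 5, 0, 3, 5, 3, 3, 4, 4, 5, 3, 4, 5, 6, 5, 5, 0, 0, 8, 5, 0, 0, 4, 6, 3, 5, 3,
    5, 5, 4, 4, 9, 0, 0, 4, 4, 0, 0, 3, 4, 4, 3, 3, 4, 4, 5, 3, 0, 4, 6, 3, 4, 3, 4, 2, 5, 2, 4, 2,
    3, 5, 5, 0, 4, 4, 6, 3, 3, 5, 4, 4, 0, 3, 4, 2, 3, 3, 0, 4, 5, 3, 5, 3, 4, 4, 9, 3, 4, 2, 4, 2,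
    4, 0, 4, 3, 4, 4, 5, 2, 5, 8, 4, 3, 3, 3, 3, 2, 0, 3, 4, 2, 3, 3, 4, 2, 4, 3, 5, 2, 3, 2, 3, 1]

def orphanCode : List ℕ :=
  [1, 5, 3, 5, 3, 17, 7, 9, 3, 13, 5, 5, 3, 3, 7, 0, 3, 5, 7, 2, 7, 9, 169, 18, 3, 27, 15, 5, 7, 3,
    0, 6, 3, 13, 3, 13, 5, 297, 10, 10, 7, 29, 7, 2, 5, 0, 2, 2, 3, 11, 7, 0, 5, 5, 22, 5, 7, 4, 15,
    2, 0, 4, 10, 2, 3, 11, 3, 27, 3, 12, 7, 12, 7, 57, 15, 0, 7, 24, 15, 12, 5, 5, 15, 10, 7, 0, 0,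
    6, 15, 0, 0, 146, 15, 3, 4, 4, 7, 23, 7, 8, 10, 0, 0, 4, 169, 0, 0, 2, 22, 24, 10, 2, 7, 8, 15,
    4, 2, 2, 10, 2, 0, 8, 4, 4, 10, 4, 2, 2, 5, 5, 11, 21, 13, 27, 23, 0, 5, 21, 5, 5, 11, 0, 8, 0,
    13, 21, 57, 18, 29, 0, 0, 106, 27, 0, 0, 5, 4, 0, 8, 0, 17, 27, 12, 0, 297, 0, 0, 0, 9, 0, 0, 0,
    5, 0, 2, 0, 3, 0, 24, 0, 0, 0, 24, 0, 3, 0, 3, 0, 4, 0, 4, 0, 5, 21, 27, 0, 13, 0, 8, 0, 2, 18,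
    10, 10, 0, 0, 4, 0, 5, 5, 0, 10, 2, 0, 2, 0, 5, 5, 146, 2, 2, 0, 4, 0, 9, 0, 12, 0, 10, 0, 4, 0,
    18, 106, 6, 0, 5, 0, 2, 0, 0, 0, 12, 0, 2, 0, 2, 0, 6, 0, 4, 0, 2, 0, 2, 0]

lemma eca_cases : ∀ N < 256, LeftPermutive N ∨ RightPermutive N ∨ N = 51 ∨ N = 204 ∨
    IsOrphan N (orphanLength.getD N 0) (orphanCode.getD N 0) := by
  unfold LeftPermutive RightPermutive IsOrphan
  decide +kernel

end Classification

/-- An elementary cellular automaton is topologically transitive if and only if it is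
surjective and sensitive. -/
theorem eca_transitive_iff_surjective_and_sensitive (N : ℕ) (hN : N ≤ 255) :
    TransitiveCA (eca N) ↔ (Function.Surjective (eca N) ∧ SensitiveCA (eca N)) := by
  refine ⟨fun h => ⟨surjective_of_transitiveCA (continuous_ca _) h,
    sensitiveCA_of_transitiveCA (commute_eca_shiftBy N) h⟩, ?_⟩
  rintro ⟨hsurj, hsens⟩
  rcases eca_cases N (by omega) with hleft | hright | rfl | rfl | horphan
  · exact transitiveCA_eca_of_leftPermutive hleft
  · exact transitiveCA_eca_of_rightPermutive hright
  · exact absurd hsens (not_sensitiveCA_of_dC_map_eq (dC_eca_eq (by decide)))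
  · exact absurd hsens (not_sensitiveCA_of_dC_map_eq (dC_eca_eq (by decide)))
  · exact absurd hsurj (not_surjective_eca_of_isOrphan horphan)
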